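/- arXiv:1211.2681 — 2 statements merged into one kernel-verified Lean document; each statement's English description precedes it below -/
import Mathlib

section
/- Let (T, ν) be a measured tree and let c > 0. If (T, ν) is c-thick, then T has an edge e with size_ν(e) ≥ c. -/
/-!  Finite multigraphs, harmonic morphisms, refinements and stable gonality,
     following Cornelissen–Kato–Kool, "A combinatorial Li–Yau inequality and
     rational points on curves".  -/

attribute [local instance] Classical.propDecidable

noncomputable section

/-- A finite multigraph: a finite vertex type, a finite edge type, and for each
edge its two (possibly equal) endpoints. -/
structure MGraph where
  V : Type
  E : Type
  [vFin : Fintype V]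
  [eFin : Fintype E]
  fst : E → V
  snd : E → V

attribute [instance] MGraph.vFin MGraph.eFin

namespace MGraph

variable (G : MGraph)

/-- The edge `e` is incident to the vertex `v`. -/
def Inc (e : G.E) (v : G.V) : Prop := G.fst e = v ∨ G.snd e = v

/-- The edge `e` joins the vertices `x` and `y` (unordered). -/
def Joins (e : G.E) (x y : G.V) : Prop :=
  (G.fst e = x ∧ G.snd e = y) ∨ (G.fst e = y ∧ G.snd e = x)

/-- Two vertices are adjacent if some edge joins them. -/
def Adj (x y : G.V) : Prop := ∃ e, G.Joins e x y

/-- A multigraph is connected if it is nonempty and any two vertices are joined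
by a walk. -/
def Connected : Prop := Nonempty G.V ∧ ∀ x y : G.V, Relation.ReflTransGen G.Adj x y

/-- No loops. -/
def Loopless : Prop := ∀ e : G.E, G.fst e ≠ G.snd e

/-- A simple graph: no loops and no multiple edges. -/
def Simple : Prop :=
  G.Loopless ∧ ∀ e e' : G.E, G.Joins e' (G.fst e) (G.snd e) → e = e'

/-- A tree is a connected graph of genus `|E| - |V| + 1 = 0`. -/
def IsTree : Prop := G.Connected ∧ Fintype.card G.V = Fintype.card G.E + 1

/-- The degree of a vertex (loops count twice). -/
def degree (v : G.V) : ℕ :=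
  (Finset.univ.filter fun e => G.fst e = v).card +
    (Finset.univ.filter fun e => G.snd e = v).card

/-- The maximal vertex degree `Δ_G`. -/
def maxDegree : ℕ := Finset.univ.sup G.degree

/-- The volume `vol(G) = Σ_v deg v = 2 |E|`. -/
def vol : ℕ := ∑ v, G.degree v

/-- The number of edges joining `x` and `y`. -/
def numEdges (x y : G.V) : ℕ := (Finset.univ.filter fun e => G.Joins e x y).card

/-- The Laplacian matrix `L_G = D_G - A_G`. -/
def lapMatrix : Matrix G.V G.V ℝ := fun x y =>
  (if x = y then (G.degree x : ℝ) else 0) - (G.numEdges x y : ℝ)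

/-- `lam` is the smallest nonzero eigenvalue `λ_G` of the Laplacian of `G`. -/
def IsFirstLapEigenvalue (lam : ℝ) : Prop :=
  IsLeast {μ : ℝ | μ ≠ 0 ∧ ∃ f : G.V → ℝ, f ≠ 0 ∧ G.lapMatrix.mulVec f = μ • f} lam

/-- The normalized Laplacian `D^{-1/2} L D^{-1/2}`. -/
def normLapMatrix : Matrix G.V G.V ℝ := fun x y =>
  G.lapMatrix x y / (Real.sqrt (G.degree x) * Real.sqrt (G.degree y))

/-- `lam` is the smallest nonzero eigenvalue of the normalized Laplacian of `G`. -/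
def IsFirstNormLapEigenvalue (lam : ℝ) : Prop :=
  IsLeast {μ : ℝ | μ ≠ 0 ∧ ∃ f : G.V → ℝ, f ≠ 0 ∧ G.normLapMatrix.mulVec f = μ • f} lam

/-- Reachability by walks staying inside the vertex set `S`. -/
def ReachIn (S : Set G.V) (x y : G.V) : Prop :=
  Relation.ReflTransGen (fun a b => a ∈ S ∧ b ∈ S ∧ G.Adj a b) x y

/-- Reachability by walks not using the edge `e₀`. -/
def ReachAvoidEdge (e₀ : G.E) (x y : G.V) : Prop :=
  Relation.ReflTransGen (fun a b => ∃ e, e ≠ e₀ ∧ G.Joins e a b) x y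

/-- The connected component of `G - e` containing the vertex `v`. -/
def edgeSide (e : G.E) (v : G.V) : Set G.V := {y | G.ReachAvoidEdge e v y}

/-- The connected component of `G - x` containing the vertex `y`. -/
def vertexSide (x y : G.V) : Set G.V := {z | G.ReachIn {v | v ≠ x} y z}

end MGraph

/-- The mass `ν(S)` of a set of vertices. -/
def mass {V : Type} [Fintype V] (ν : V → ℝ) (S : Set V) : ℝ :=
  ∑ v ∈ Finset.univ.filter (fun v => v ∈ S), ν v

/-- A probability measure on a finite vertex set. -/
def IsProbMeasure {V : Type} [Fintype V] (ν : V → ℝ) : Prop :=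
  (∀ v, 0 ≤ ν v) ∧ ∑ v, ν v = 1

namespace MGraph

/-- The size of an edge `e` of a measured tree `(T, ν)`:
`min(ν(T₁(e)), ν(T₂(e)))`. -/
def edgeSize (G : MGraph) (ν : G.V → ℝ) (e : G.E) : ℝ :=
  min (mass ν (G.edgeSide e (G.fst e))) (mass ν (G.edgeSide e (G.snd e)))

/-- `(T, ν)` is `c`-thick: for every vertex `x`, `T - x` has a connected
component of measure at least `c`. -/
def Thick (G : MGraph) (ν : G.V → ℝ) (c : ℝ) : Prop :=
  ∀ x : G.V, ∃ y : G.V, y ≠ x ∧ c ≤ mass ν (G.vertexSide x y)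

/-- Subdivision of the edge `e₀`: a new vertex in the middle of `e₀`,
and `e₀` replaced by two new edges. -/
def subdivide (G : MGraph) (e₀ : G.E) : MGraph where
  V := G.V ⊕ Unit
  E := {e : G.E // e ≠ e₀} ⊕ Bool
  vFin := inferInstance
  eFin := inferInstance
  fst := fun e => match e with
    | Sum.inl e1 => Sum.inl (G.fst e1.1)
    | Sum.inr false => Sum.inl (G.fst e₀)
    | Sum.inr true => Sum.inr ()
  snd := fun e => match e with
    | Sum.inl e1 => Sum.inl (G.snd e1.1)
    | Sum.inr false => Sum.inr ()
    | Sum.inr true => Sum.inl (G.snd e₀)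

/-- Addition of a leaf at the vertex `v₀`: one new vertex, joined to `v₀` by
one new edge. -/
def addLeaf (G : MGraph) (v₀ : G.V) : MGraph where
  V := G.V ⊕ Unit
  E := G.E ⊕ Unit
  vFin := inferInstance
  eFin := inferInstance
  fst := Sum.elim (fun e => Sum.inl (G.fst e)) (fun _ => Sum.inl v₀)
  snd := Sum.elim (fun e => Sum.inl (G.snd e)) (fun _ => Sum.inr ())

/-- An isomorphism of multigraphs. -/
structure Iso (G H : MGraph) where
  eV : G.V ≃ H.V
  eE : G.E ≃ H.E
  ends : ∀ e, H.Joins (eE e) (eV (G.fst e)) (eV (G.snd e))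

/-- `Refines G G' ι p` means: `G'` is a refinement of `G` (obtained from `G`
by finitely many subdivisions of edges and additions of leaves, up to
isomorphism).  The map `ι` identifies the vertices of `G` inside `G'` and the
"provenance" map `p` records, for every edge of `G'`, the edge of `G` it lies
over (`none` for edges of added leaf-trees). -/
inductive Refines : ∀ (G G' : MGraph), (G.V → G'.V) → (G'.E → Option G.E) → Prop
  | refl (G : MGraph) : Refines G G id (fun e => some e)
  | subdiv {G G' : MGraph} {ι : G.V → G'.V} {p : G'.E → Option G.E}
      (h : Refines G G' ι p) (e₀ : G'.E) :
      Refines G (subdivide G' e₀) (fun v => Sum.inl (ι v))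
        (fun e => Sum.elim (fun e1 : {e : G'.E // e ≠ e₀} => p e1.1) (fun _ : Bool => p e₀) e)
  | leaf {G G' : MGraph} {ι : G.V → G'.V} {p : G'.E → Option G.E}
      (h : Refines G G' ι p) (v₀ : G'.V) :
      Refines G (addLeaf G' v₀) (fun v => Sum.inl (ι v))
        (fun e => Sum.elim (fun e1 : G'.E => p e1) (fun _ : Unit => none) e)
  | iso {G G' : MGraph} {ι : G.V → G'.V} {p : G'.E → Option G.E}
      (h : Refines G G' ι p) {G'' : MGraph} (φ : Iso G' G'') :
      Refines G G'' (fun v => φ.eV (ι v)) (fun e => p (φ.eE.symm e))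

/-- `Subdivides G G' ι`: `G'` is obtained from `G` by subdividing edges only
(no leaves added), up to isomorphism. -/
inductive Subdivides : ∀ (G G' : MGraph), (G.V → G'.V) → Prop
  | refl (G : MGraph) : Subdivides G G id
  | subdiv {G G' : MGraph} {ι : G.V → G'.V}
      (h : Subdivides G G' ι) (e₀ : G'.E) :
      Subdivides G (subdivide G' e₀) (fun v => Sum.inl (ι v))
  | iso {G G' : MGraph} {ι : G.V → G'.V}
      (h : Subdivides G G' ι) {G'' : MGraph} (φ : Iso G' G'') :
      Subdivides G G'' (fun v => φ.eV (ι v))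

/-- A finite harmonic (indexed) morphism of multigraphs: vertices map to
vertices, edges to edges (compatibly with endpoints), each edge `e` carries a
positive index `r e`, and around each vertex `v` the sums
`Σ_{e ∋ v, fE e = e'} r e` have a common value `m v > 0` for all edges `e'`
incident to the image of `v`. -/
structure FinHarm (G T : MGraph) where
  fV : G.V → T.V
  fE : G.E → T.E
  r : G.E → ℕ
  r_pos : ∀ e, 0 < r e
  ends : ∀ e, T.Joins (fE e) (fV (G.fst e)) (fV (G.snd e))
  m : G.V → ℕ
  m_pos : ∀ v, 0 < m v
  harm : ∀ v : G.V, ∀ e' : T.E, T.Inc e' (fV v) →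
    m v = ∑ e ∈ Finset.univ.filter (fun e => G.Inc e v ∧ fE e = e'), r e

/-- `φ` has degree `d`: over every vertex the `m`'s sum to `d` and over every
edge the indices sum to `d`. -/
def FinHarm.IsDegree {G T : MGraph} (φ : FinHarm G T) (d : ℕ) : Prop :=
  (∀ v' : T.V, ∑ v ∈ Finset.univ.filter (fun v => φ.fV v = v'), φ.m v = d) ∧
  (∀ e' : T.E, ∑ e ∈ Finset.univ.filter (fun e => φ.fE e = e'), φ.r e = d)

/-- The set of degrees of finite harmonic morphisms from refinements of `G` to
trees; the stable gonality `sgon(G)` is the least element of this set. -/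
def sgonSet (G : MGraph) : Set ℕ :=
  {d | ∃ (G' T : MGraph) (ι : G.V → G'.V) (p : G'.E → Option G.E),
        Refines G G' ι p ∧ G'.Loopless ∧ T.IsTree ∧
        ∃ φ : FinHarm G' T, φ.IsDegree d}

/-- `|φ⁻¹(S) ∩ V(G)|` for `S ⊆ V(T)`, `G'` a refinement of `G` via `ι`,
and `φ : G' → T`. -/
def pushCount {G G' T : MGraph} (ι : G.V → G'.V) (φ : FinHarm G' T) (S : Set T.V) : ℕ :=
  (Finset.univ.filter (fun v : G.V => φ.fV (ι v) ∈ S)).card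

/-- The pushforward measure `φ_* μ_G (S) = |φ⁻¹(S) ∩ V(G)| / |G|`. -/
def pushMeasure {G G' T : MGraph} (ι : G.V → G'.V) (φ : FinHarm G' T) (S : Set T.V) : ℝ :=
  (pushCount ι φ S : ℝ) / (Fintype.card G.V : ℝ)

/-- The size of an edge `e` of `T` with respect to the pushforward measure
`φ_* μ_G`. -/
def pushEdgeSize {G G' T : MGraph} (ι : G.V → G'.V) (φ : FinHarm G' T) (e : T.E) : ℝ :=
  min (pushMeasure ι φ (T.edgeSide e (T.fst e))) (pushMeasure ι φ (T.edgeSide e (T.snd e)))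

/-- The measured tree `(T, φ_* μ_G)` is `c`-thick. -/
def PushThick {G G' T : MGraph} (ι : G.V → G'.V) (φ : FinHarm G' T) (c : ℝ) : Prop :=
  ∀ x : T.V, ∃ y : T.V, y ≠ x ∧ c ≤ pushMeasure ι φ (T.vertexSide x y)

end MGraph

open MGraph

lemma my_mass_mono {V : Type} [Fintype V] {ν : V → ℝ} (hν : ∀ v, 0 ≤ ν v)
    {S S' : Set V} (h : S ⊆ S') : mass ν S ≤ mass ν S' := by
  apply Finset.sum_le_sum_of_subset_of_nonneg
  · exact Finset.monotone_filter_right _ (fun v _ hv => h hv)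
  · intro v _ _; exact hν v

lemma my_joins_symm {G : MGraph} {e : G.E} {a b : G.V} (h : G.Joins e a b) :
    G.Joins e b a := Or.symm h

/-- From a walk from `y` to `x` with `y ≠ x` extract an edge `e` incident to
`x` whose other endpoint `w` lies in the component of `G - x` containing `y`. -/
lemma my_exists_edge_toward' (G : MGraph) {x y : G.V}
    (h : Relation.ReflTransGen G.Adj y x) :
    y = x ∨ ∃ w e, G.Joins e w x ∧ w ≠ x ∧ G.ReachIn {v | v ≠ x} w y := by
  induction h using Relation.ReflTransGen.head_induction_on with
  | refl => exact Or.inl rfl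
  | head hab _ ih =>
    rename_i a b _
    by_cases hax : a = x
    · exact Or.inl hax
    · right
      by_cases hbx : b = x
      · subst hbx
        obtain ⟨e, he⟩ := hab
        exact ⟨a, e, he, hax, Relation.ReflTransGen.refl⟩
      · rcases ih with rfl | ⟨w, e, he, hwx, hwr⟩
        · exact absurd rfl hbx
        · refine ⟨w, e, he, hwx, hwr.tail ?_⟩
          obtain ⟨e', he'⟩ := hab
          exact ⟨hbx, hax, ⟨e', my_joins_symm he'⟩⟩

lemma my_exists_edge_toward (G : MGraph) {x y : G.V}
    (h : Relation.ReflTransGen G.Adj y x) (hxy : y ≠ x) :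
    ∃ w e, G.Joins e w x ∧ w ≠ x ∧ G.ReachIn {v | v ≠ x} w y :=
  (my_exists_edge_toward' G h).resolve_left hxy

/-- The component of `G - v` containing `u` is contained in the side of any
edge joining `u` and `v` that contains `u`. -/
lemma my_vertexSide_subset_edgeSide (G : MGraph) {e : G.E} {u v : G.V}
    (he : G.Joins e u v) (huv : u ≠ v) :
    G.vertexSide v u ⊆ G.edgeSide e u := by
  intro z hz
  refine Relation.ReflTransGen.mono ?_ _ _ hz
  rintro a b ⟨hav, hbv, e', he'⟩
  refine ⟨e', ?_, he'⟩
  rintro rfl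
  rcases he with ⟨h1, h2⟩ | ⟨h1, h2⟩ <;> rcases he' with ⟨h3, h4⟩ | ⟨h3, h4⟩
  · exact hbv (h4.symm.trans h2)
  · exact hav (h4.symm.trans h2)
  · exact hav (h3.symm.trans h1)
  · exact hbv (h3.symm.trans h1)

/-- Lemma "Amini" in the paper: a `c`-thick measured tree
`(T, ν)` has an edge of size at least `c`. -/
theorem thick_measured_tree_has_large_edge (T : MGraph) (hT : T.IsTree)
    (ν : T.V → ℝ) (hν : IsProbMeasure ν) (c : ℝ) (hc : 0 < c)
    (hthick : T.Thick ν c) :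
    ∃ e : T.E, c ≤ T.edgeSize ν e := by
  -- Step 1: for every vertex `x` there is an edge incident to `x` whose
  -- "far" endpoint `w` has a heavy component of `T - x`.
  have step1 : ∀ x : T.V, ∃ w : T.V, ∃ e : T.E,
      T.Joins e w x ∧ w ≠ x ∧ c ≤ mass ν (T.vertexSide x w) := by
    intro x
    obtain ⟨y, hyx, hy⟩ := hthick x
    obtain ⟨w, e, he, hwx, hwy⟩ := my_exists_edge_toward T (hT.1.2 y x) hyx
    refine ⟨w, e, he, hwx, le_trans hy (my_mass_mono hν.1 ?_)⟩
    intro z hz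
    exact hwy.trans hz
  choose w e hJoins hne hmass using step1
  -- Step 2: pigeonhole — two distinct vertices choose the same edge.
  have hcard : Fintype.card T.E < Fintype.card T.V := by
    rw [hT.2]; omega
  obtain ⟨x, x', hxx', hee⟩ := Fintype.exists_ne_map_eq_of_card_lt e hcard
  -- Step 3: the common edge joins `x` and `x'` and points both ways.
  have h1 := hJoins x
  have h2 := hJoins x'
  rw [hee] at h1
  -- endpoints of `e x'` are `{w x, x}` and `{w x', x'}`
  have hwx : w x = x' ∧ w x' = x := by
    rcases h1 with ⟨ha1, ha2⟩ | ⟨ha1, ha2⟩ <;> rcases h2 with ⟨hb1, hb2⟩ | ⟨hb1, hb2⟩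
    · exact absurd (ha2.symm.trans hb2) hxx'
    · exact ⟨ha1.symm.trans hb1, hb2.symm.trans ha2⟩
    · exact ⟨ha2.symm.trans hb2, hb1.symm.trans ha1⟩
    · exact absurd (ha1.symm.trans hb1) hxx'
  obtain ⟨hw1, hw2⟩ := hwx
  -- Step 4: both sides of the edge `e x'` are heavy.
  have hm1 : c ≤ mass ν (T.vertexSide x x') := hw1 ▸ hmass x
  have hm2 : c ≤ mass ν (T.vertexSide x' x) := hw2 ▸ hmass x'
  have hne1 : x' ≠ x := hxx'.symm
  have hJ : T.Joins (e x') x' x := hw1 ▸ h1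
  have hside1 : c ≤ mass ν (T.edgeSide (e x') x') :=
    le_trans hm1 (my_mass_mono hν.1 (my_vertexSide_subset_edgeSide T hJ hne1))
  have hside2 : c ≤ mass ν (T.edgeSide (e x') x) :=
    le_trans hm2 (my_mass_mono hν.1 (my_vertexSide_subset_edgeSide T (my_joins_symm hJ) hxx'))
  refine ⟨e x', ?_⟩
  unfold MGraph.edgeSize
  rcases hJ with ⟨hf, hs⟩ | ⟨hf, hs⟩
  · rw [hf, hs]; exact le_min hside1 hside2
  · rw [hf, hs]; exact le_min hside2 hside1
end
end

section
/- Let G be a connected loopless graph, G' a refinement of G, and φ: G' → T a finite harmonic morphism to a tree T. Then for every edge e of T, deg φ ≥ (1/2) · λ_G · size_{φ_*μ_G}(e) · |G|. -/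
/-!  Finite multigraphs, harmonic morphisms, refinements and stable gonality,
     following Cornelissen–Kato–Kool, "A combinatorial Li–Yau inequality and
     rational points on curves".  -/

attribute [local instance] Classical.propDecidable

noncomputable section

open MGraph

/-! ### Auxiliary lemmas -/

namespace MGraph

lemma Joins.symm' {G : MGraph} {e : G.E} {x y : G.V} (h : G.Joins e x y) : G.Joins e y x := by
  rcases h with ⟨h1, h2⟩ | ⟨h1, h2⟩
  · exact Or.inr ⟨h1, h2⟩
  · exact Or.inl ⟨h1, h2⟩

lemma joins_fst_snd {G : MGraph} (e : G.E) : G.Joins e (G.fst e) (G.snd e) := Or.inl ⟨rfl, rfl⟩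

end MGraph

section Chains

variable {α : Type*} {R : α → α → Prop} {r : α}

/-- `chainN R r n v`: there is a chain of length `n` from `r` to `v`. -/
def chainN (R : α → α → Prop) (r : α) : ℕ → α → Prop
  | 0, v => v = r
  | n + 1, v => ∃ u, chainN R r n u ∧ R u v

lemma exists_chainN {v : α} (h : Relation.ReflTransGen R r v) : ∃ n, chainN R r n v := by
  induction h with
  | refl => exact ⟨0, rfl⟩
  | tail _ hbc ih => obtain ⟨n, hn⟩ := ih; exact ⟨n + 1, _, hn, hbc⟩

lemma reflTransGen_lift' {β : Type*} {R' : β → β → Prop} {f : α → β}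
    (hstep : ∀ a b, R a b → Relation.ReflTransGen R' (f a) (f b)) {a b : α}
    (h : Relation.ReflTransGen R a b) : Relation.ReflTransGen R' (f a) (f b) := by
  induction h with
  | refl => exact Relation.ReflTransGen.refl
  | tail _ hbc ih => exact ih.trans (hstep _ _ hbc)

end Chains

/-- If all vertices are reachable from `r` avoiding the edge `e₀`, then
`|V| ≤ |E|`. -/
lemma MGraph.card_le_of_reach (G : MGraph) (e₀ : G.E) (r : G.V)
    (hreach : ∀ v, Relation.ReflTransGen (fun a b => ∃ e, e ≠ e₀ ∧ G.Joins e a b) r v) :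
    Fintype.card G.V ≤ Fintype.card G.E := by
  classical
  set R : G.V → G.V → Prop := fun a b => ∃ e, e ≠ e₀ ∧ G.Joins e a b with hR
  have hex : ∀ v : G.V, ∃ n, chainN R r n v := fun v => exists_chainN (hreach v)
  set dist : G.V → ℕ := fun v => Nat.find (hex v) with hdist
  have key : ∀ v : G.V, v ≠ r → ∃ e, e ≠ e₀ ∧ ∃ u, G.Joins e u v ∧ dist u < dist v := by
    intro v hv
    have hspec : chainN R r (dist v) v := Nat.find_spec (hex v)
    have hne : dist v ≠ 0 := by
      intro h0
      rw [h0] at hspec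
      exact hv hspec
    obtain ⟨m, hm⟩ := Nat.exists_eq_succ_of_ne_zero hne
    rw [hm] at hspec
    obtain ⟨u, hu, e, hQ, hj⟩ := hspec
    have hdu : dist u ≤ m := Nat.find_le hu
    exact ⟨e, hQ, u, hj, by omega⟩
  -- build the injection
  have hinj : ∃ F : {v : G.V // v ≠ r} → {e : G.E // e ≠ e₀}, Function.Injective F := by
    have hch : ∀ v : {v : G.V // v ≠ r},
        ∃ e : {e : G.E // e ≠ e₀}, ∃ u, G.Joins e.1 u v.1 ∧ dist u < dist v.1 := by
      intro ⟨v, hv⟩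
      obtain ⟨e, hQ, u, hj, hlt⟩ := key v hv
      exact ⟨⟨e, hQ⟩, u, hj, hlt⟩
    choose F u hj hlt using hch
    refine ⟨F, fun v w hvw => ?_⟩
    by_contra hne
    have hjv := hj v
    have hjw := hj w
    rw [hvw] at hjv
    have hvw' : v.1 ≠ w.1 := fun h => hne (Subtype.ext h)
    have hltv := hlt v
    have hltw := hlt w
    rcases hjv with ⟨h1, h2⟩ | ⟨h1, h2⟩ <;> rcases hjw with ⟨h3, h4⟩ | ⟨h3, h4⟩
    · exact hvw' (h2.symm.trans h4)
    · have e1 : u v = w.1 := h1.symm.trans h3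
      have e2 : u w = v.1 := h4.symm.trans h2
      rw [e1] at hltv
      rw [e2] at hltw
      omega
    · have e1 : u v = w.1 := h2.symm.trans h4
      have e2 : u w = v.1 := h3.symm.trans h1
      rw [e1] at hltv
      rw [e2] at hltw
      omega
    · exact hvw' (h1.symm.trans h3)
  obtain ⟨F, hF⟩ := hinj
  have hcard : Fintype.card {v : G.V // v ≠ r} ≤ Fintype.card {e : G.E // e ≠ e₀} :=
    Fintype.card_le_of_injective F hF
  have h1 : Fintype.card {v : G.V // v ≠ r} = Fintype.card G.V - 1 := by
    rw [Fintype.card_subtype_compl, Fintype.card_subtype_eq]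
  have h2 : Fintype.card {e : G.E // e ≠ e₀} = Fintype.card G.E - 1 := by
    rw [Fintype.card_subtype_compl, Fintype.card_subtype_eq]
  have h3 : 1 ≤ Fintype.card G.V := Fintype.card_pos_iff.mpr ⟨r⟩
  have h4 : 1 ≤ Fintype.card G.E := Fintype.card_pos_iff.mpr ⟨e₀⟩
  omega

namespace MGraph

lemma avoid_symm (T : MGraph) (e₀ : T.E) :
    Symmetric (fun a b => ∃ e, e ≠ e₀ ∧ T.Joins e a b) :=
  fun _ _ ⟨e, h1, h2⟩ => ⟨e, h1, h2.symm'⟩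

lemma IsTree.not_reachAvoid {T : MGraph} (hT : T.IsTree) (e₀ : T.E) :
    ¬ T.ReachAvoidEdge e₀ (T.fst e₀) (T.snd e₀) := by
  intro hsep
  have hsymm := avoid_symm T e₀
  have hreach : ∀ v, Relation.ReflTransGen
      (fun a b => ∃ e, (e ≠ e₀) ∧ T.Joins e a b) (T.fst e₀) v := by
    intro v
    refine reflTransGen_lift' (f := id) ?_ (hT.1.2 (T.fst e₀) v)
    rintro a b ⟨e, hj⟩
    show Relation.ReflTransGen _ a b
    by_cases he : e = e₀
    · subst he
      rcases hj with ⟨h1, h2⟩ | ⟨h1, h2⟩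
      · exact h1 ▸ h2 ▸ hsep
      · exact h2 ▸ h1 ▸ ((@Relation.ReflTransGen.stdSymm _ _ ⟨hsymm⟩).symm _ _ hsep)
    · exact Relation.ReflTransGen.single ⟨e, he, hj⟩
  have hc := T.card_le_of_reach e₀ (T.fst e₀) hreach
  have h3 := hT.2
  omega

lemma IsTree.edgeSide_disjoint {T : MGraph} (hT : T.IsTree) (e₀ : T.E) (z : T.V)
    (h1 : z ∈ T.edgeSide e₀ (T.fst e₀)) (h2 : z ∈ T.edgeSide e₀ (T.snd e₀)) : False := by
  have h1' : T.ReachAvoidEdge e₀ (T.fst e₀) z := h1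
  have h2' : T.ReachAvoidEdge e₀ (T.snd e₀) z := h2
  exact hT.not_reachAvoid e₀
    (h1'.trans ((@Relation.ReflTransGen.stdSymm _ _ ⟨avoid_symm T e₀⟩).symm _ _ h2'))

lemma Connected.edgeSide_union {T : MGraph} (hT : T.Connected) (e₀ : T.E) (z : T.V) :
    z ∈ T.edgeSide e₀ (T.fst e₀) ∨ z ∈ T.edgeSide e₀ (T.snd e₀) := by
  have hw := hT.2 (T.fst e₀) z
  induction hw with
  | refl => exact Or.inl Relation.ReflTransGen.refl
  | tail hab hbc ih =>
    obtain ⟨e, hj⟩ := hbc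
    by_cases he : e = e₀
    · subst he
      rcases hj with ⟨h1, h2⟩ | ⟨h1, h2⟩
      · exact Or.inr (h2 ▸ Relation.ReflTransGen.refl)
      · exact Or.inl (h1 ▸ Relation.ReflTransGen.refl)
    · rcases ih with h | h
      · exact Or.inl (Relation.ReflTransGen.tail h ⟨e, he, hj⟩)
      · exact Or.inr (Relation.ReflTransGen.tail h ⟨e, he, hj⟩)

/-- Key refinement invariant: every edge `e₀` of `G` gives a walk in `G'` between
the images of its endpoints, using only edges lying over `e₀`. -/
lemma Refines.walk {G G' : MGraph} {ι : G.V → G'.V} {p : G'.E → Option G.E}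
    (h : Refines G G' ι p) (e₀ : G.E) :
    Relation.ReflTransGen (fun a b => ∃ e', p e' = some e₀ ∧ G'.Joins e' a b)
      (ι (G.fst e₀)) (ι (G.snd e₀)) := by
  induction h with
  | refl => exact Relation.ReflTransGen.single ⟨e₀, rfl, joins_fst_snd e₀⟩
  | @subdiv G' ι p h e₁ ih =>
    refine reflTransGen_lift' (f := Sum.inl) ?_ ih
    rintro a b ⟨e', hp, hj⟩
    by_cases he : e' = e₁
    · subst he
      have s1 : Relation.ReflTransGen
          (fun x y => ∃ e'', (Sum.elim (fun e1 : {e : G'.E // e ≠ e'} => p e1.1)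
            (fun _ : Bool => p e') e'') = some e₀ ∧ (subdivide G' e').Joins e'' x y)
          (Sum.inl (G'.fst e')) (Sum.inl (G'.snd e')) :=
        Relation.ReflTransGen.trans
          (Relation.ReflTransGen.single ⟨Sum.inr false, hp, Or.inl ⟨rfl, rfl⟩⟩)
          (Relation.ReflTransGen.single ⟨Sum.inr true, hp, Or.inl ⟨rfl, rfl⟩⟩)
      rcases hj with ⟨h1, h2⟩ | ⟨h1, h2⟩
      · exact h1 ▸ h2 ▸ s1
      · have hsym : Symmetric (fun x y => ∃ e'', (Sum.elim
            (fun e1 : {e : G'.E // e ≠ e'} => p e1.1) (fun _ : Bool => p e') e'') = some e₀ ∧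
            (subdivide G' e').Joins e'' x y) := fun _ _ ⟨e'', q1, q2⟩ => ⟨e'', q1, q2.symm'⟩
        exact h1 ▸ h2 ▸ ((@Relation.ReflTransGen.stdSymm _ _ ⟨hsym⟩).symm _ _ s1)
    · refine Relation.ReflTransGen.single ⟨Sum.inl ⟨e', he⟩, hp, ?_⟩
      rcases hj with ⟨h1, h2⟩ | ⟨h1, h2⟩
      · exact Or.inl ⟨by simp [subdivide, h1], by simp [subdivide, h2]⟩
      · exact Or.inr ⟨by simp [subdivide, h1], by simp [subdivide, h2]⟩
  | @leaf G' ι p h v₀ ih =>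
    refine reflTransGen_lift' (f := Sum.inl) ?_ ih
    rintro a b ⟨e', hp, hj⟩
    refine Relation.ReflTransGen.single ⟨Sum.inl e', hp, ?_⟩
    rcases hj with ⟨h1, h2⟩ | ⟨h1, h2⟩
    · exact Or.inl ⟨by simp [addLeaf, h1], by simp [addLeaf, h2]⟩
    · exact Or.inr ⟨by simp [addLeaf, h1], by simp [addLeaf, h2]⟩
  | @iso G' ι p h G'' ψ ih =>
    refine reflTransGen_lift' (f := ψ.eV) ?_ ih
    rintro a b ⟨e', hp, hj⟩
    refine Relation.ReflTransGen.single ⟨ψ.eE e', by simp [hp], ?_⟩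
    have hends := ψ.ends e'
    rcases hj with ⟨h1, h2⟩ | ⟨h1, h2⟩
    · exact h1 ▸ h2 ▸ hends
    · exact h1 ▸ h2 ▸ hends.symm'
  
end MGraph

open Matrix in
lemma MGraph.foo : True := trivial

namespace MGraph

open Matrix

lemma numEdges_symm (G : MGraph) (x y : G.V) : G.numEdges x y = G.numEdges y x := by
  unfold numEdges
  congr 1
  ext e
  simp only [Finset.mem_filter, Finset.mem_univ, true_and]
  exact ⟨fun h => h.symm', fun h => h.symm'⟩

lemma lap_isHermitian (G : MGraph) : G.lapMatrix.IsHermitian := by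
  ext i j
  simp only [Matrix.conjTranspose_apply, star_trivial, lapMatrix, numEdges_symm G j i]
  by_cases h : i = j
  · subst h; rfl
  · simp [h, Ne.symm h]

lemma numEdges_cast (G : MGraph) (u v : G.V) :
    (G.numEdges u v : ℝ) = ∑ e, (if G.Joins e u v then (1 : ℝ) else 0) := by
  unfold numEdges
  rw [Finset.card_filter]
  push_cast
  rfl

lemma degree_cast (G : MGraph) (u : G.V) :
    (G.degree u : ℝ) = (∑ e, if G.fst e = u then (1 : ℝ) else 0)
      + ∑ e, if G.snd e = u then (1 : ℝ) else 0 := by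
  unfold degree
  rw [Finset.card_filter, Finset.card_filter]
  push_cast
  rfl

lemma quadform (G : MGraph) (hGl : G.Loopless) (x : G.V → ℝ) :
    x ⬝ᵥ G.lapMatrix.mulVec x = ∑ e, (x (G.fst e) - x (G.snd e))^2 := by
  have hmv : ∀ u, G.lapMatrix.mulVec x u
      = (G.degree u : ℝ) * x u - ∑ v, (G.numEdges u v : ℝ) * x v := by
    intro u
    simp only [Matrix.mulVec, dotProduct, lapMatrix, sub_mul, ite_mul, zero_mul,
      Finset.sum_sub_distrib, Finset.sum_ite_eq, Finset.mem_univ, if_true]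
  have hlhs : x ⬝ᵥ G.lapMatrix.mulVec x
      = (∑ u, (G.degree u : ℝ) * x u ^ 2) - ∑ u, ∑ v, (G.numEdges u v : ℝ) * (x u * x v) := by
    simp only [dotProduct, hmv, mul_sub, Finset.sum_sub_distrib, Finset.mul_sum]
    congr 1
    · exact Finset.sum_congr rfl fun u _ => by ring
    · exact Finset.sum_congr rfl fun u _ => Finset.sum_congr rfl fun v _ => by ring
  have hdeg : (∑ u, (G.degree u : ℝ) * x u ^ 2)
      = ∑ e, (x (G.fst e) ^ 2 + x (G.snd e) ^ 2) := by
    simp only [degree_cast, add_mul, Finset.sum_add_distrib, Finset.sum_mul]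
    rw [Finset.sum_comm (γ := G.V), Finset.sum_comm (γ := G.V)]
    simp [ite_mul, Finset.sum_ite_eq']
  have hcross : (∑ u, ∑ v, (G.numEdges u v : ℝ) * (x u * x v))
      = ∑ e, (2 * (x (G.fst e) * x (G.snd e))) := by
    simp only [numEdges_cast, Finset.sum_mul, ite_mul, zero_mul, one_mul]
    have step1 : (∑ u : G.V, ∑ v : G.V, ∑ e : G.E, if G.Joins e u v then x u * x v else 0)
        = ∑ u : G.V, ∑ e : G.E, ∑ v : G.V, (if G.Joins e u v then x u * x v else 0) :=
      Finset.sum_congr rfl fun u _ => Finset.sum_comm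
    have step2 : (∑ u : G.V, ∑ e : G.E, ∑ v : G.V, (if G.Joins e u v then x u * x v else 0))
        = ∑ e : G.E, ∑ u : G.V, ∑ v : G.V, (if G.Joins e u v then x u * x v else 0) :=
      Finset.sum_comm
    rw [step1, step2]
    refine Finset.sum_congr rfl fun e _ => ?_
    have hsplit : ∀ u v, (if G.Joins e u v then x u * x v else 0)
        = (if G.fst e = u ∧ G.snd e = v then x u * x v else 0)
          + (if G.fst e = v ∧ G.snd e = u then x u * x v else 0) := by
      intro u v
      by_cases h1 : G.fst e = u ∧ G.snd e = v <;> by_cases h2 : G.fst e = v ∧ G.snd e = u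
      · exact absurd (h1.1.trans h2.2.symm) (hGl e)
      · rw [if_pos (show G.Joins e u v from Or.inl h1), if_pos h1, if_neg h2, add_zero]
      · rw [if_pos (show G.Joins e u v from Or.inr h2), if_neg h1, if_pos h2, zero_add]
      · rw [if_neg (fun h : G.Joins e u v => h.elim h1 h2), if_neg h1, if_neg h2, add_zero]
    simp only [hsplit, Finset.sum_add_distrib]
    simp [ite_and, Finset.sum_ite_eq, Finset.sum_ite_eq']
    ring
  rw [hlhs, hdeg, hcross, ← Finset.sum_sub_distrib]
  exact Finset.sum_congr rfl fun e _ => by ring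

end MGraph

namespace MGraph
open Matrix

lemma lap_transpose (G : MGraph) : G.lapMatrix.transpose = G.lapMatrix := by
  ext i j
  simp only [Matrix.transpose_apply, lapMatrix, numEdges_symm G j i]
  by_cases h : i = j
  · subst h; rfl
  · simp [h, Ne.symm h]

lemma kernel_constant (G : MGraph) (hG : G.Connected) (hGl : G.Loopless) (g : G.V → ℝ)
    (hker : G.lapMatrix.mulVec g = 0) : ∀ u v : G.V, g u = g v := by
  have hq : ∑ e, (g (G.fst e) - g (G.snd e))^2 = 0 := by
    rw [← quadform G hGl g, hker]
    simp
  have hz : ∀ e : G.E, g (G.fst e) = g (G.snd e) := by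
    intro e
    have h := (Finset.sum_eq_zero_iff_of_nonneg
      (fun e _ => sq_nonneg _)).mp hq e (Finset.mem_univ e)
    have h2 := pow_eq_zero_iff (n := 2) (by norm_num) |>.mp h
    linarith [h2]
  intro u v
  have hw := hG.2 u v
  induction hw with
  | refl => rfl
  | tail _ hbc ih =>
    obtain ⟨e, hj⟩ := hbc
    rcases hj with ⟨h1, h2⟩ | ⟨h1, h2⟩
    · rw [ih, ← h1, ← h2]; exact hz e
    · rw [ih, ← h1, ← h2]; exact (hz e).symm

lemma lam_pos (G : MGraph) (hGl : G.Loopless) {lam : ℝ}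
    (hlam : G.IsFirstLapEigenvalue lam) : 0 < lam := by
  obtain ⟨hne, f₀, hf0, heig⟩ := hlam.1
  have h1 : f₀ ⬝ᵥ G.lapMatrix.mulVec f₀ = lam * (f₀ ⬝ᵥ f₀) := by
    rw [heig]
    simp only [dotProduct, Pi.smul_apply, smul_eq_mul, Finset.mul_sum]
    exact Finset.sum_congr rfl fun v _ => by ring
  have h2 : 0 ≤ f₀ ⬝ᵥ G.lapMatrix.mulVec f₀ := by
    rw [quadform G hGl f₀]
    exact Finset.sum_nonneg fun e _ => sq_nonneg _
  have h3 : 0 < f₀ ⬝ᵥ f₀ := by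
    obtain ⟨v, hv⟩ := Function.ne_iff.mp hf0
    exact Finset.sum_pos' (fun i _ => mul_self_nonneg _)
      ⟨v, Finset.mem_univ v, mul_self_pos.mpr hv⟩
  have h4 : 0 ≤ lam := by nlinarith
  exact lt_of_le_of_ne h4 (Ne.symm hne)

lemma lam_le_rayleigh (G : MGraph) (hG : G.Connected) (hGl : G.Loopless)
    {lam : ℝ} (hlam : G.IsFirstLapEigenvalue lam) (f : G.V → ℝ)
    (hsum : ∑ v, f v = 0) :
    lam * (f ⬝ᵥ f) ≤ f ⬝ᵥ G.lapMatrix.mulVec f := by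
  classical
  have hH : G.lapMatrix.IsHermitian := G.lap_isHermitian
  set B := hH.eigenvectorBasis with hB
  set μ := hH.eigenvalues with hμ
  have hinner : ∀ a b : EuclideanSpace ℝ G.V,
      (inner ℝ a b : ℝ) = (a : G.V → ℝ) ⬝ᵥ (b : G.V → ℝ) := by
    intro a b
    simp [PiLp.inner_apply, dotProduct, RCLike.inner_apply, starRingEnd_apply]
    exact Finset.sum_congr rfl fun i _ => mul_comm _ _
  set x : EuclideanSpace ℝ G.V := WithLp.toLp 2 f with hx
  set c : G.V → ℝ := fun i => B.repr x i with hc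
  have hci : ∀ i, c i = (B i : G.V → ℝ) ⬝ᵥ f := by
    intro i
    show B.repr x i = (B i : G.V → ℝ) ⬝ᵥ f
    rw [B.repr_apply_apply]
    exact hinner (B i) x
  have hmv : ∀ j, G.lapMatrix.mulVec (B j : G.V → ℝ) = μ j • (B j : G.V → ℝ) := fun j =>
    hH.mulVec_eigenvectorBasis j
  -- ⟪x, x⟫ in coordinates
  have hxx : f ⬝ᵥ f = ∑ i, c i ^ 2 := by
    have h1 : (inner ℝ x x : ℝ) = (inner ℝ (B.repr x) (B.repr x) : ℝ) :=
      (B.repr.inner_map_map x x).symm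
    have h2 : (inner ℝ (B.repr x) (B.repr x) : ℝ) = ∑ i, c i * c i := by
      rw [hinner]
      rfl
    have h3 := (hinner x x).symm.trans (h1.trans h2)
    rw [hx] at h3
    rw [h3]
    exact Finset.sum_congr rfl fun i _ => (sq (c i)).symm
  -- the coordinates of L x
  set y : EuclideanSpace ℝ G.V := WithLp.toLp 2 (G.lapMatrix.mulVec f) with hy
  have hyi : ∀ i, B.repr y i = μ i * c i := by
    intro i
    rw [B.repr_apply_apply, hinner]
    show (B i : G.V → ℝ) ⬝ᵥ G.lapMatrix.mulVec f = μ i * c i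
    rw [dotProduct_mulVec, ← Matrix.mulVec_transpose, lap_transpose,
      hmv i, smul_dotProduct, ← hci i]
    rfl
  have hLx : f ⬝ᵥ G.lapMatrix.mulVec f = ∑ i, μ i * c i ^ 2 := by
    have h1 : (inner ℝ x y : ℝ) = (inner ℝ (B.repr x) (B.repr y) : ℝ) :=
      (B.repr.inner_map_map x y).symm
    have h2 : (inner ℝ (B.repr x) (B.repr y) : ℝ) = ∑ i, c i * (μ i * c i) := by
      rw [hinner]
      refine Finset.sum_congr rfl fun i _ => ?_
      rw [hyi i]
    have h3 := (hinner x y).symm.trans (h1.trans h2)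
    rw [h3]
    exact Finset.sum_congr rfl fun i _ => by ring
  -- zero eigenvalues have zero coordinate
  have hzero : ∀ i, μ i = 0 → c i = 0 := by
    intro i h0
    have hBi : G.lapMatrix.mulVec (B i : G.V → ℝ) = 0 := by
      rw [hmv i, h0]
      simp
    have hconst := kernel_constant G hG hGl (B i : G.V → ℝ) hBi
    obtain ⟨v₀⟩ := hG.1
    rw [hci i]
    calc (B i : G.V → ℝ) ⬝ᵥ f = ∑ v, (B i : G.V → ℝ) v₀ * f v :=
          Finset.sum_congr rfl fun v _ => by rw [hconst v v₀]
      _ = (B i : G.V → ℝ) v₀ * ∑ v, f v := by rw [Finset.mul_sum]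
      _ = 0 := by rw [hsum, mul_zero]
  -- nonzero eigenvalues are at least lam
  have hle : ∀ i, μ i ≠ 0 → lam ≤ μ i := by
    intro i h0
    refine hlam.2 ⟨h0, (B i : G.V → ℝ), ?_, ?_⟩
    · intro hz
      have hnorm := B.orthonormal.1 i
      have : (B i : EuclideanSpace ℝ G.V) = 0 := by
        ext v
        exact congrFun hz v
      rw [this] at hnorm
      simp at hnorm
    · exact hmv i
  rw [hxx, hLx, Finset.mul_sum]
  refine Finset.sum_le_sum fun i _ => ?_
  by_cases h0 : μ i = 0
  · rw [hzero i h0, h0]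
    simp
  · have := hle i h0
    nlinarith [sq_nonneg (c i)]

end MGraph

namespace MGraph

/-- If a walk in `G'` over a fixed edge `e₀` starts over the `fst`-side of `e` and none of
its edges maps to `e`, it stays on that side. -/
lemma walk_hits {G0 G' T : MGraph} {p : G'.E → Option G0.E} (φ : FinHarm G' T) (e : T.E)
    (e₀ : G0.E) {a b : G'.V}
    (hw : Relation.ReflTransGen (fun a b => ∃ e', p e' = some e₀ ∧ G'.Joins e' a b) a b)
    (ha : φ.fV a ∈ T.edgeSide e (T.fst e)) :
    (∃ e', p e' = some e₀ ∧ φ.fE e' = e) ∨ φ.fV b ∈ T.edgeSide e (T.fst e) := by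
  induction hw with
  | refl => exact Or.inr ha
  | tail hab hbc ih =>
    rcases ih with h | h
    · exact Or.inl h
    · obtain ⟨e', hp, hj⟩ := hbc
      by_cases he : φ.fE e' = e
      · exact Or.inl ⟨e', hp, he⟩
      · right
        rcases hj with ⟨h1, h2⟩ | ⟨h1, h2⟩
        · exact Relation.ReflTransGen.tail h ⟨φ.fE e', he, h1 ▸ h2 ▸ φ.ends e'⟩
        · exact Relation.ReflTransGen.tail h ⟨φ.fE e', he, h1 ▸ h2 ▸ (φ.ends e').symm'⟩

end MGraph

open MGraph
open Matrix


set_option maxHeartbeats 1000000 in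
/-- Proposition "Cheeger" in the paper: for a refinement `G'`
of `G` and a finite harmonic morphism `φ : G' → T` to a tree, for any edge `e`
of `T`: `deg φ ≥ (1/2) · λ_G · size_{φ_*μ_G}(e) · |G|`. -/
theorem deg_ge_half_lambda_size (G G' T : MGraph) (hG : G.Connected)
    (hGl : G.Loopless) (hG'l : G'.Loopless)
    (ι : G.V → G'.V) (p : G'.E → Option G.E) (href : Refines G G' ι p)
    (hT : T.IsTree) (φ : FinHarm G' T)
    (lam : ℝ) (hlam : G.IsFirstLapEigenvalue lam)
    (d : ℕ) (hd : φ.IsDegree d) (e : T.E) :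
    (1 / 2) * lam * pushEdgeSize ι φ e * (Fintype.card G.V : ℝ) ≤ (d : ℝ) := by
  classical
  set S₁ := T.edgeSide e (T.fst e) with hS₁
  set S₂ := T.edgeSide e (T.snd e) with hS₂
  set N : ℝ := (Fintype.card G.V : ℝ) with hN
  set A : Finset G.V := Finset.univ.filter (fun v => φ.fV (ι v) ∈ S₁) with hA
  set a : ℝ := (A.card : ℝ) with ha
  have hn0 : (0 : ℝ) < N := by
    rw [hN]
    exact_mod_cast Fintype.card_pos_iff.mpr hG.1
  set χ : G.V → ℝ := fun v => if φ.fV (ι v) ∈ S₁ then 1 else 0 with hχ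
  set f : G.V → ℝ := fun v => χ v - a / N with hf
  have hχsum : ∑ v, χ v = a := by
    rw [hχ, ha, hA]
    simp [Finset.sum_boole]
  have hsum : ∑ v, f v = 0 := by
    rw [hf]
    rw [Finset.sum_sub_distrib, hχsum, Finset.sum_const, Finset.card_univ, nsmul_eq_mul, ← hN]
    field_simp
    ring
  -- crossing edges
  set C : Finset G.E := Finset.univ.filter
    (fun e₀ => ¬((φ.fV (ι (G.fst e₀)) ∈ S₁) ↔ (φ.fV (ι (G.snd e₀)) ∈ S₁))) with hC
  have hquad : f ⬝ᵥ G.lapMatrix.mulVec f = (C.card : ℝ) := by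
    rw [MGraph.quadform G hGl f]
    have hterm : ∀ e₀ : G.E, (f (G.fst e₀) - f (G.snd e₀))^2 =
        if ¬((φ.fV (ι (G.fst e₀)) ∈ S₁) ↔ (φ.fV (ι (G.snd e₀)) ∈ S₁)) then (1 : ℝ) else 0 := by
      intro e₀
      rw [hf]
      simp only [hχ]
      by_cases h1 : φ.fV (ι (G.fst e₀)) ∈ S₁ <;> by_cases h2 : φ.fV (ι (G.snd e₀)) ∈ S₁
      · rw [if_pos h1, if_pos h2, if_neg (by tauto)]; ring
      · rw [if_pos h1, if_neg h2, if_pos (by tauto)]; ring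
      · rw [if_neg h1, if_pos h2, if_pos (by tauto)]; ring
      · rw [if_neg h1, if_neg h2, if_neg (by tauto)]; ring
    rw [Finset.sum_congr rfl fun e₀ _ => hterm e₀, Finset.sum_boole, hC]
  have hff : f ⬝ᵥ f = a - a^2 / N := by
    have hterm : ∀ v, f v * f v = χ v - 2 * (a / N) * χ v + (a / N)^2 := by
      intro v
      have hχχ : χ v * χ v = χ v := by
        rw [hχ]
        by_cases h : φ.fV (ι v) ∈ S₁ <;> simp [h]
      rw [hf]
      simp only
      linear_combination hχχ
    show ∑ v, f v * f v = a - a^2 / N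
    rw [Finset.sum_congr rfl fun v _ => hterm v]
    rw [Finset.sum_add_distrib, Finset.sum_sub_distrib, hχsum, ← Finset.mul_sum, hχsum,
      Finset.sum_const, Finset.card_univ, nsmul_eq_mul, ← hN]
    field_simp
    ring
  -- the number of crossing edges is at most d
  have hCd : (C.card : ℝ) ≤ (d : ℝ) := by
    have key : ∀ e₀ ∈ C, ∃ e', p e' = some e₀ ∧ φ.fE e' = e := by
      intro e₀ hmem
      rw [hC, Finset.mem_filter] at hmem
      have hw := href.walk e₀
      by_cases h1 : φ.fV (ι (G.fst e₀)) ∈ S₁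
      · have h2 : φ.fV (ι (G.snd e₀)) ∉ S₁ := fun h => hmem.2 ⟨fun _ => h, fun _ => h1⟩
        rcases walk_hits φ e e₀ hw h1 with h | h
        · exact h
        · exact absurd h h2
      · have h2 : φ.fV (ι (G.snd e₀)) ∈ S₁ := by
          by_contra h2
          exact hmem.2 ⟨fun h => absurd h h1, fun h => absurd h h2⟩
        have hsym : Symmetric (fun x y => ∃ e', p e' = some e₀ ∧ G'.Joins e' x y) :=
          fun _ _ ⟨e', q1, q2⟩ => ⟨e', q1, q2.symm'⟩
        rcases walk_hits φ e e₀ ((@Relation.ReflTransGen.stdSymm _ _ ⟨hsym⟩).symm _ _ hw) h2 with h | h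
        · exact h
        · exact absurd h h1
    have hnat : C.card ≤ d := by
      rcases C.eq_empty_or_nonempty with h | ⟨c₀, hc₀⟩
      · simp [h]
      · obtain ⟨ew, hew⟩ := key c₀ hc₀
        have hNE : Nonempty G'.E := ⟨ew⟩
        set F : G.E → G'.E := fun e₀ =>
          if h : ∃ e', p e' = some e₀ ∧ φ.fE e' = e then h.choose else Classical.arbitrary _
          with hF
        have hFspec : ∀ e₀ ∈ C, p (F e₀) = some e₀ ∧ φ.fE (F e₀) = e := by
          intro e₀ hmem
          have hx := key e₀ hmem
          rw [hF]
          simp only [dif_pos hx]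
          exact hx.choose_spec
        have hmaps : ∀ e₀ ∈ C, F e₀ ∈ Finset.univ.filter (fun e' => φ.fE e' = e) := by
          intro e₀ hmem
          exact Finset.mem_filter.mpr ⟨Finset.mem_univ _, (hFspec e₀ hmem).2⟩
        have hinj : Set.InjOn F C := by
          intro x hx y hy hxy
          have h1 := (hFspec x hx).1
          have h2 := (hFspec y hy).1
          rw [hxy] at h1
          rw [h1] at h2
          exact Option.some_injective _ h2
        have h1 : C.card ≤ (Finset.univ.filter (fun e' => φ.fE e' = e)).card :=
          Finset.card_le_card_of_injOn F hmaps hinj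
        have h2 : (Finset.univ.filter (fun e' => φ.fE e' = e)).card ≤ d := by
          rw [← hd.2 e]
          calc (Finset.univ.filter (fun e' => φ.fE e' = e)).card
              = ∑ e' ∈ Finset.univ.filter (fun e' => φ.fE e' = e), 1 :=
                (Finset.card_eq_sum_ones _)
            _ ≤ ∑ e' ∈ Finset.univ.filter (fun e' => φ.fE e' = e), φ.r e' :=
                Finset.sum_le_sum fun e' _ => φ.r_pos e'
        omega
    exact_mod_cast hnat
  have hmain : lam * (a - a^2 / N) ≤ (d : ℝ) := by
    have h := MGraph.lam_le_rayleigh G hG hGl hlam f hsum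
    rw [hff, hquad] at h
    linarith
  -- sizes
  have hpm1 : pushMeasure ι φ S₁ = a / N := by
    rw [pushMeasure, ← hN, ha]
    congr 2
  have hc2 : (pushCount ι φ S₂ : ℝ) ≤ N - a := by
    have hsub : Finset.univ.filter (fun v : G.V => φ.fV (ι v) ∈ S₂) ⊆
        Finset.univ.filter (fun v : G.V => ¬(φ.fV (ι v) ∈ S₁)) := by
      intro v hv
      rw [Finset.mem_filter] at hv ⊢
      exact ⟨hv.1, fun h => hT.edgeSide_disjoint e _ h hv.2⟩
    have h1 : pushCount ι φ S₂ ≤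
        (Finset.univ.filter (fun v : G.V => ¬(φ.fV (ι v) ∈ S₁))).card :=
      Finset.card_le_card hsub
    have h2 : A.card + (Finset.univ.filter (fun v : G.V => ¬(φ.fV (ι v) ∈ S₁))).card
        = Fintype.card G.V := by
      rw [hA, ← Finset.card_univ]
      exact Finset.card_filter_add_card_filter_not _
    have h3 : pushCount ι φ S₂ + A.card ≤ Fintype.card G.V := by omega
    have h4 : (pushCount ι φ S₂ : ℝ) + a ≤ N := by
      rw [ha, hN]
      exact_mod_cast h3
    linarith
  set s : ℝ := pushEdgeSize ι φ e with hs
  have hsmin : s = min (pushMeasure ι φ S₁) (pushMeasure ι φ S₂) := rfl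
  have hs1 : s ≤ a / N := by
    rw [hsmin, hpm1]
    exact min_le_left _ _
  have hs2' : s ≤ pushMeasure ι φ S₂ := by
    rw [hsmin]
    exact min_le_right _ _
  have hs1' : s * N ≤ a := (le_div_iff₀ hn0).mp hs1
  have hs2 : s * N ≤ N - a := by
    have : pushMeasure ι φ S₂ = (pushCount ι φ S₂ : ℝ) / N := by rw [pushMeasure, hN]
    have h4 : s * N ≤ (pushCount ι φ S₂ : ℝ) := (le_div_iff₀ hn0).mp (this ▸ hs2')
    linarith
  have ha0 : 0 ≤ a := by rw [ha]; exact Nat.cast_nonneg _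
  have hna : 0 ≤ N - a := by
    have hle : A.card ≤ Fintype.card G.V := by
      rw [hA]
      exact le_trans (Finset.card_filter_le _ _) (le_of_eq Finset.card_univ)
    have hle' : (A.card : ℝ) ≤ (Fintype.card G.V : ℝ) := by exact_mod_cast hle
    rw [ha, hN]
    linarith
  have hlampos := MGraph.lam_pos G hGl hlam
  have hdiv : (1 / 2) * s * N ≤ a * (N - a) / N := by
    rw [le_div_iff₀ hn0]
    nlinarith [mul_le_mul_of_nonneg_right hs1' hna, mul_le_mul_of_nonneg_right hs2 ha0]
  have han : a - a^2 / N = a * (N - a) / N := by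
    field_simp
  calc (1 / 2) * lam * s * N = lam * ((1 / 2) * s * N) := by ring
    _ ≤ lam * (a * (N - a) / N) := mul_le_mul_of_nonneg_left hdiv hlampos.le
    _ = lam * (a - a^2 / N) := by rw [han]
    _ ≤ (d : ℝ) := hmain
end
end
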